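/- Let A be an R-algebra, I ⊴ A an ideal, and (A, →) a normalizing rewrite system for A/I such that a ↠ 0 for all a ∈ I. Then such a rewrite system is confluent. -/
import Mathlib


def RewriteIrreducible {A : Type*} (r : A → A → Prop) (a : A) : Prop :=
  ∀ b : A, r a b → b = a

def IsNormalFormOf {A : Type*} (r : A → A → Prop) (a b : A) : Prop :=
  Relation.ReflTransGen r a b ∧ RewriteIrreducible r b

def RewriteConfluent {A : Type*} (r : A → A → Prop) : Prop :=
  ∀ a b c : A, Relation.ReflTransGen r a b → Relation.ReflTransGen r a c →
    ∃ d : A, Relation.ReflTransGen r b d ∧ Relation.ReflTransGen r c d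

lemma irred_rtg_eq {A : Type*} {r : A → A → Prop} {a x : A}
    (h : RewriteIrreducible r a) (hx : Relation.ReflTransGen r a x) : x = a := by
  induction hx with
  | refl => rfl
  | tail _ hbc ih => subst ih; exact h _ hbc

lemma rtg_sub_mem {R A : Type*} [CommRing R] [Ring A] [Algebra R A]
    (I : TwoSidedIdeal A) {r : A → A → Prop}
    (hstep : ∀ a b : A, r a b → a - b ∈ I) {a b : A}
    (h : Relation.ReflTransGen r a b) : a - b ∈ I := by
  induction h with
  | refl => simpa using I.zero_mem
  | @tail b c _ hbc ih =>
      have := I.add_mem ih (hstep b c hbc)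
      simpa using this

/-- A normalizing rewrite system for `A/I` with `a ↠ 0` for all `a ∈ I` is
confluent. -/
theorem confluent_of_ideal_to_zero {R A : Type*} [CommRing R] [Ring A]
    [Algebra R A] (I : TwoSidedIdeal A) (r : A → A → Prop)
    (hstep : ∀ a b : A, r a b → a - b ∈ I)
    (hsmul : ∀ (c : R) (a : A), RewriteIrreducible r a → RewriteIrreducible r (c • a))
    (hadd : ∀ a b : A, RewriteIrreducible r a → RewriteIrreducible r b →
      RewriteIrreducible r (a + b))
    (hnorm : ∀ a : A, ∃ b : A, IsNormalFormOf r a b)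
    (hzero : ∀ a ∈ I, Relation.ReflTransGen r a 0) :
    RewriteConfluent r := by
  intro a b c hab hac
  obtain ⟨nb, hbnb, hirrb⟩ := hnorm b
  obtain ⟨nc, hcnc, hirrc⟩ := hnorm c
  -- nb - nc ∈ I
  have hmem : nb - nc ∈ I := by
    have h1 : a - nb ∈ I := rtg_sub_mem (R:=R) I hstep (hab.trans hbnb)
    have h2 : a - nc ∈ I := rtg_sub_mem (R:=R) I hstep (hac.trans hcnc)
    have := I.sub_mem h2 h1
    simpa using this
  have hnegc : RewriteIrreducible r (-nc) := by
    have := hsmul (-1 : R) nc hirrc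
    simpa using this
  have hirr : RewriteIrreducible r (nb - nc) := by
    have := hadd nb (-nc) hirrb hnegc
    simpa [sub_eq_add_neg] using this
  have : (0 : A) = nb - nc := irred_rtg_eq hirr (hzero _ hmem)
  have heq : nb = nc := sub_eq_zero.mp this.symm
  exact ⟨nb, hbnb, heq ▸ hcnc⟩
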